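/- arXiv:2007.10154 — 6 statements merged into one kernel-verified Lean document; each statement's English description precedes it below -/
import Mathlib

section
/- Let E be a finite-dimensional real vector space with a nondegenerate alternating bilinear form ω, let λ : E → ℝ be linear, let S ⊆ E be a subspace, and set τ = S^⊥ = {u ∈ E : ω(u,s) = 0 for all s ∈ S}. Define on E × ℝ the alternating bilinear form ω̃((u,a),(u',a')) = ω(u,u') and the linear functional α(u,a) = a − λ(u); define on E × ℝ × ℝ the alternating bilinear form Ω((u,a,b),(u',a',b')) = b·a' − b'·a − b·λ(u') + b'·λ(u) − ω(u,u'). Then the following three conditions are equivalent: (1) τ ⊆ S and λ vanishes on τ; (2) {w ∈ E × ℝ : ω̃(w,(s,0)) = 0 for all s ∈ S} ∩ ker α ⊆ S × {0}; (3) {w ∈ E × ℝ × ℝ : Ω(w,(s,0,c)) = 0 for all s ∈ S and all c ∈ ℝ} ⊆ S × {0} × ℝ. -/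
/-!
Conditions (1) and (2) differ only by the substitution `a = lam u`. For (3), testing the
hypothesis with `c = 0` and with `s = 0, c = 1` says that `a = lam u` and that the functional
`ω u + b • lam` vanishes on `S`. Under (1) this functional also kills `Sᗮ ⊆ ker lam`, so `u`
lies in `Sᗮᗮ = S`; then `0 = ω u u = -b * lam u`, and both `b ≠ 0` and `b = 0` force
`lam u = 0`.
-/

namespace LinearMap.BilinForm

variable {K E : Type*} [Field K] [AddCommGroup E] [Module K E] [FiniteDimensional K E]
  {B : LinearMap.BilinForm K E} {S : Submodule K E}

lemma mem_of_forall_orthogonal_apply_eq_zero (hB : B.Nondegenerate) (hR : B.IsRefl) {u : E}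
    (hu : ∀ t, (∀ s ∈ S, B t s = 0) → B u t = 0) : u ∈ S := by
  rw [← orthogonal_orthogonal hB hR S]
  intro t ht
  exact hR _ _ (hu t fun s hs => hR _ _ (ht s hs))

lemma mem_and_apply_eq_zero_of_apply_add_mul_eq_zero (hA : B.IsAlt) (hB : B.Nondegenerate)
    {lam : E →ₗ[K] K} (hS : ∀ t, (∀ s ∈ S, B t s = 0) → t ∈ S ∧ lam t = 0)
    {u : E} {b : K} (hu : ∀ s ∈ S, B u s + b * lam s = 0) : u ∈ S ∧ lam u = 0 := by
  have huS : u ∈ S := by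
    refine mem_of_forall_orthogonal_apply_eq_zero hB hA.isRefl fun t ht => ?_
    obtain ⟨htS, htl⟩ := hS t ht
    simpa [htl] using hu t htS
  refine ⟨huS, ?_⟩
  have hbu : b * lam u = 0 := by simpa [hA u] using hu u huS
  rcases mul_eq_zero.mp hbu with hb | hlu
  · exact (hS u fun s hs => by simpa [hb] using hu s hs).2
  · exact hlu

end LinearMap.BilinForm

open LinearMap.BilinForm

/-- Pointwise linear-algebra form of the paper's lemma on conicity
(Section "Conicity on symplectic hypersurfaces"): equivalence of
(1) conic coisotropic, (2) contact coisotropic in the contactization, and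
(3) coisotropic in the symplectization. -/
theorem conic_coisotropic_tfae
    (E : Type*) [AddCommGroup E] [Module ℝ E] [FiniteDimensional ℝ E]
    (ω : E →ₗ[ℝ] E →ₗ[ℝ] ℝ)
    (halt : ∀ u : E, ω u u = 0)
    (hnd : ∀ u : E, (∀ w : E, ω u w = 0) → u = 0)
    (lam : E →ₗ[ℝ] ℝ)
    (S : Submodule ℝ E) :
    List.TFAE [
      -- (1) τ = Sᗮ ⊆ S and lam vanishes on τ
      (∀ u : E, (∀ s ∈ S, ω u s = 0) → u ∈ S ∧ lam u = 0),
      -- (2) contact coisotropy in E × ℝ with form ω̃ and functional α(u,a) = a - lam u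
      (∀ w : E × ℝ, (∀ s ∈ S, ω w.1 s = 0) → w.2 - lam w.1 = 0 →
        w.1 ∈ S ∧ w.2 = 0),
      -- (3) coisotropy in E × ℝ × ℝ for Ω((u,a,b),(u',a',b')) =
      --     b a' - b' a - b lam u' + b' lam u - ω u u'
      (∀ w : E × ℝ × ℝ,
        (∀ s ∈ S, ∀ c : ℝ,
          w.2.2 * 0 - c * w.2.1 - w.2.2 * lam s + c * lam w.1 - ω w.1 s = 0) →
        w.1 ∈ S ∧ w.2.1 = 0) ] := by
  have hA : LinearMap.IsAlt ω := halt
  have hB : Nondegenerate ω := hA.isRefl.nondegenerate_iff_separatingLeft.mpr hnd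
  tfae_have 1 → 2 := fun h1 ⟨u, a⟩ hu ha => by
    obtain ⟨huS, hlu⟩ := h1 u hu
    exact ⟨huS, by linarith⟩
  tfae_have 2 → 1 := fun h2 u hu => by simpa using h2 (u, lam u) hu (sub_self _)
  tfae_have 1 → 3 := fun h1 ⟨u, a, b⟩ hw => by
    dsimp only at hw
    have ha : a = lam u := by linarith [by simpa using hw 0 S.zero_mem 1]
    have hu : ∀ s ∈ S, ω u s + b * lam s = 0 := fun s hs => by linarith [hw s hs 0]
    obtain ⟨huS, hlu⟩ := mem_and_apply_eq_zero_of_apply_add_mul_eq_zero hA hB h1 hu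
    exact ⟨huS, ha.trans hlu⟩
  tfae_have 3 → 1 := fun h3 u hu => by
    simpa using h3 (u, lam u, 0) fun s hs c => by simp [hu s hs]
  tfae_finish
end

section
/- Let m, k ≥ 0 and identify the cotangent bundle of ℝ^m × ℝ^k with (ℝ^m × ℝ^k) × (ℝ^m × ℝ^k), writing points as (x, e, ξ, η) with (x,e) the base point and (ξ,η) the covector. Let Λ ⊆ (ℝ^m × ℝ^k) × (ℝ^m × ℝ^k) be conical, i.e. if (x,e,ξ,η) ∈ Λ and c > 0 then (x,e,cξ,cη) ∈ Λ. Let N = {(x,e,ξ,0) : x ∈ ℝ^m, e ∈ ℝ^k, ξ ∈ ℝ^m} (the covectors pulled back from the base ℝ^m), and let Π(x,e,ξ,η) = (x,e,η) be the projection to (ℝ^m × ℝ^k) × ℝ^k (the relative cotangent bundle). Then Λ +̂ N = Π^{-1}( closure( Π(Λ) ) ). -/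
/-!
A covector with vanishing fibre component can always be placed over the same base point as
the covector of `Λ` it is added to, so the condition `‖aₙ - bₙ‖ ‖ζₙ‖ → 0` costs nothing.
Adding it leaves the fibre component untouched and shifts the horizontal component
arbitrarily; hence `Λ +̂ N` only remembers limits of base points and fibre components of `Λ`.
-/

open Filter Topology

/-- The Kashiwara–Schapira `+̂` operation on subsets of a cotangent bundle
(in local coordinates): `(p, ζ) ∈ A +̂ B` iff there are sequences
`(aₙ, ζₙ) ∈ A`, `(bₙ, ηₙ) ∈ B` with `aₙ → p`, `bₙ → p`, `ζₙ + ηₙ → ζ` and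
`‖aₙ - bₙ‖ ‖ζₙ‖ → 0`. -/
def hatPlus {V W : Type*} [NormedAddCommGroup V] [NormedAddCommGroup W]
    (A B : Set (V × W)) : Set (V × W) :=
  {q | ∃ (a b : ℕ → V) (ζ η : ℕ → W),
    (∀ n, (a n, ζ n) ∈ A) ∧ (∀ n, (b n, η n) ∈ B) ∧
    Tendsto a atTop (𝓝 q.1) ∧ Tendsto b atTop (𝓝 q.1) ∧
    Tendsto (fun n => ζ n + η n) atTop (𝓝 q.2) ∧
    Tendsto (fun n => ‖a n - b n‖ * ‖ζ n‖) atTop (𝓝 (0 : ℝ))}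

theorem mem_hatPlus_of_common_base {V W : Type*}
    [NormedAddCommGroup V] [NormedAddCommGroup W]
    {A B : Set (V × W)} {q : V × W} (a : ℕ → V) (ζ η : ℕ → W)
    (hA : ∀ n, (a n, ζ n) ∈ A) (hB : ∀ n, (a n, η n) ∈ B)
    (ha : Tendsto a atTop (𝓝 q.1)) (hsum : Tendsto (fun n => ζ n + η n) atTop (𝓝 q.2)) :
    q ∈ hatPlus A B :=
  ⟨a, a, ζ, η, hA, hB, ha, ha, hsum, by simpa only [sub_self, norm_zero, zero_mul]
    using tendsto_const_nhds⟩

section RelativeCotangent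

variable {V W₁ W₂ : Type*} [NormedAddCommGroup V] [NormedAddCommGroup W₁]
  [NormedAddCommGroup W₂]

/-- The paper's `Π : T*E → T*π`. -/
def relCotangentProj (q : V × (W₁ × W₂)) : V × W₂ := (q.1, q.2.2)

theorem hatPlus_subset_preimage_closure (A : Set (V × (W₁ × W₂))) :
    hatPlus A {q | q.2.2 = 0} ⊆ relCotangentProj ⁻¹' closure (relCotangentProj '' A) := by
  rintro q ⟨a, b, ζ, η, hA, hB, ha, -, hsum, -⟩
  have hfibre : Tendsto (fun n => (ζ n).2) atTop (𝓝 q.2.2) := by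
    have hη : ∀ n, (η n).2 = 0 := hB
    simpa only [Prod.snd_add, hη, add_zero] using hsum.snd_nhds
  exact mem_closure_of_tendsto (ha.prodMk_nhds hfibre)
    (Eventually.of_forall fun n => ⟨(a n, ζ n), hA n, rfl⟩)

theorem preimage_closure_subset_hatPlus (A : Set (V × (W₁ × W₂))) :
    relCotangentProj ⁻¹' closure (relCotangentProj '' A) ⊆ hatPlus A {q | q.2.2 = 0} := by
  intro q hq
  obtain ⟨u, hu, hlim⟩ := mem_closure_iff_seq_limit.1 hq
  choose p hpA hpu using hu
  have hp : Tendsto (fun n => relCotangentProj (p n)) atTop (𝓝 (relCotangentProj q)) := by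
    simpa only [hpu] using hlim
  -- the added covector cancels the horizontal component of `p n` and replaces it by `q.2.1`
  refine mem_hatPlus_of_common_base (fun n => (p n).1) (fun n => (p n).2)
    (fun n => (q.2.1 - (p n).2.1, 0)) hpA (fun _ => rfl) hp.fst_nhds ?_
  have hsum : (fun n => (p n).2 + (q.2.1 - (p n).2.1, (0 : W₂))) =
      fun n => (q.2.1, (p n).2.2) := by
    funext n
    ext <;> simp
  rw [hsum]
  exact tendsto_const_nhds.prodMk_nhds hp.snd_nhds

theorem hatPlus_eq_preimage_closure_relCotangentProj (A : Set (V × (W₁ × W₂))) :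
    hatPlus A {q | q.2.2 = 0} = relCotangentProj ⁻¹' closure (relCotangentProj '' A) :=
  (hatPlus_subset_preimage_closure A).antisymm (preimage_closure_subset_hatPlus A)

end RelativeCotangent

theorem hatPlus_base_conormal_eq_preimage_closure_general (m k : ℕ)
    (Λ : Set ((EuclideanSpace ℝ (Fin m) × EuclideanSpace ℝ (Fin k)) ×
      (EuclideanSpace ℝ (Fin m) × EuclideanSpace ℝ (Fin k)))) :
    hatPlus Λ {q : (EuclideanSpace ℝ (Fin m) × EuclideanSpace ℝ (Fin k)) ×
        (EuclideanSpace ℝ (Fin m) × EuclideanSpace ℝ (Fin k)) | q.2.2 = 0} =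
      (fun q : (EuclideanSpace ℝ (Fin m) × EuclideanSpace ℝ (Fin k)) ×
          (EuclideanSpace ℝ (Fin m) × EuclideanSpace ℝ (Fin k)) => (q.1, q.2.2)) ⁻¹'
        closure ((fun q : (EuclideanSpace ℝ (Fin m) × EuclideanSpace ℝ (Fin k)) ×
          (EuclideanSpace ℝ (Fin m) × EuclideanSpace ℝ (Fin k)) => (q.1, q.2.2)) '' Λ) :=
  hatPlus_eq_preimage_closure_relCotangentProj Λ

/-- Coordinate form of the paper's Lemma `lem:addrelcotpushpull`: for a trivial
fiber bundle `ℝᵐ × ℝᵏ → ℝᵐ` and a conical subset `Λ` of the cotangent bundle,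
`Λ +̂ π*T*B = Π⁻¹(closure(Π(Λ)))`, where `N = π*T*B` is the set of covectors
pulled back from the base and `Π` is the projection to the relative cotangent
bundle. -/
theorem hatPlus_base_conormal_eq_preimage_closure (m k : ℕ)
    (Λ : Set ((EuclideanSpace ℝ (Fin m) × EuclideanSpace ℝ (Fin k)) ×
      (EuclideanSpace ℝ (Fin m) × EuclideanSpace ℝ (Fin k))))
    (hconic : ∀ q ∈ Λ, ∀ c : ℝ, 0 < c → (q.1, c • q.2) ∈ Λ) :
    hatPlus Λ {q : (EuclideanSpace ℝ (Fin m) × EuclideanSpace ℝ (Fin k)) ×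
        (EuclideanSpace ℝ (Fin m) × EuclideanSpace ℝ (Fin k)) | q.2.2 = 0} =
      (fun q : (EuclideanSpace ℝ (Fin m) × EuclideanSpace ℝ (Fin k)) ×
          (EuclideanSpace ℝ (Fin m) × EuclideanSpace ℝ (Fin k)) => (q.1, q.2.2)) ⁻¹'
        closure ((fun q : (EuclideanSpace ℝ (Fin m) × EuclideanSpace ℝ (Fin k)) ×
          (EuclideanSpace ℝ (Fin m) × EuclideanSpace ℝ (Fin k)) => (q.1, q.2.2)) '' Λ) :=
  hatPlus_base_conormal_eq_preimage_closure_general m k Λ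
end

section
/- Let V be a topological space and η : ℝ × V → V a continuous map with η(0, v) = v for all v ∈ V. For Z ⊆ V and ε > 0, say Z is ε-chordless if there is no s ∈ (0, ε] and z ∈ Z with η(s, z) ∈ Z. Let Y ⊆ V be compact and locally chordless, meaning: for every y ∈ Y there exist an open neighborhood U of y and ε > 0 such that Y ∩ U is ε-chordless. Then there exists ε > 0 such that Y is ε-chordless. -/
/-!
Call `Z` free of short chords of `Y` if no point of `Z` is carried into `Y` by the flow in a
short positive time. This property passes to subsets and to finite unions (take the minimum of
the times), and local chordlessness together with `η (0, ·) = id` and continuity gives it on a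
neighbourhood of each point of `Y`: points near `y` stay in the chordless window `U` for short
times, so their chords would be chords of `Y ∩ U`. Compactness glues these local statements.
-/

open Set Filter Topology

lemma exists_pos_eventually_forall_Ioc_of_eventually_nhds_zero_prod {V : Type*}
    [TopologicalSpace V] {P : ℝ × V → Prop} {y : V} (h : ∀ᶠ p in 𝓝 ((0 : ℝ), y), P p) :
    ∃ δ > 0, ∀ᶠ z in 𝓝 y, ∀ s ∈ Ioc (0 : ℝ) δ, P (s, z) := by
  rw [nhds_prod_eq] at h
  obtain ⟨Ps, hPs, Pz, hPz, hP⟩ := eventually_prod_iff.1 h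
  obtain ⟨δ, hδ, hball⟩ := Metric.eventually_nhds_iff.1 hPs
  refine ⟨δ / 2, by positivity, hPz.mono fun z hz s hs => hP (hball ?_) hz⟩
  rw [Real.dist_eq, sub_zero, abs_of_pos hs.1]
  linarith [hs.2]

def NoShortChordsFrom {V : Type*} (η : ℝ × V → V) (Y Z : Set V) : Prop :=
  ∃ ε > (0 : ℝ), ∀ s ∈ Ioc (0 : ℝ) ε, ∀ z ∈ Z, η (s, z) ∉ Y

namespace NoShortChordsFrom

variable {V : Type*} {η : ℝ × V → V} {Y Z Z' : Set V}

lemma empty : NoShortChordsFrom η Y ∅ :=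
  ⟨1, one_pos, fun _ _ _ h => h.elim⟩

lemma mono (h : NoShortChordsFrom η Y Z') (hZ : Z ⊆ Z') : NoShortChordsFrom η Y Z :=
  let ⟨ε, hε, hchord⟩ := h
  ⟨ε, hε, fun s hs z hz => hchord s hs z (hZ hz)⟩

lemma union (h : NoShortChordsFrom η Y Z) (h' : NoShortChordsFrom η Y Z') :
    NoShortChordsFrom η Y (Z ∪ Z') := by
  obtain ⟨ε, hε, hchord⟩ := h
  obtain ⟨ε', hε', hchord'⟩ := h'
  refine ⟨min ε ε', lt_min hε hε', fun s hs z hz => ?_⟩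
  rcases hz with hz | hz
  · exact hchord s ⟨hs.1, hs.2.trans (min_le_left _ _)⟩ z hz
  · exact hchord' s ⟨hs.1, hs.2.trans (min_le_right _ _)⟩ z hz

lemma exists_mem_nhdsWithin [TopologicalSpace V] (hcont : Continuous η)
    (hid : ∀ v : V, η (0, v) = v) {y : V} {U : Set V} (hU : IsOpen U) (hyU : y ∈ U) {ε : ℝ}
    (hε : 0 < ε) (hchord : ∀ s ∈ Ioc (0 : ℝ) ε, ∀ z ∈ Y ∩ U, η (s, z) ∉ Y ∩ U) :
    ∃ t ∈ 𝓝[Y] y, NoShortChordsFrom η Y t := by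
  have hstay : ∀ᶠ p in 𝓝 ((0 : ℝ), y), η p ∈ U :=
    hcont.continuousAt.preimage_mem_nhds (by rwa [hid y, hU.mem_nhds_iff])
  obtain ⟨δ, hδ, hW⟩ := exists_pos_eventually_forall_Ioc_of_eventually_nhds_zero_prod hstay
  refine ⟨Y ∩ {z | z ∈ U ∧ ∀ s ∈ Ioc (0 : ℝ) δ, η (s, z) ∈ U},
    inter_mem_nhdsWithin Y (Eventually.and (hU.mem_nhds hyU) hW), min δ ε, lt_min hδ hε, ?_⟩
  rintro s hs z ⟨hzY, hzU, hzW⟩ hsY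
  exact hchord s ⟨hs.1, hs.2.trans (min_le_right _ _)⟩ z ⟨hzY, hzU⟩
    ⟨hsY, hzW s ⟨hs.1, hs.2.trans (min_le_left _ _)⟩⟩

end NoShortChordsFrom

/-- A compact, locally chordless subset is `ε`-chordless for some `ε > 0`
(Section "Propagation and displacement" of the paper), stated for an arbitrary
continuous flow-like map `η : ℝ × V → V` with `η(0, ·) = id` on a topological
space.  Here `Z` is `ε`-chordless if there is no `s ∈ (0, ε]` and `z ∈ Z` with
`η (s, z) ∈ Z`. -/
theorem compact_locallyChordless_isChordless
    (V : Type*) [TopologicalSpace V]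
    (η : ℝ × V → V) (hcont : Continuous η) (hid : ∀ v : V, η (0, v) = v)
    (Y : Set V) (hY : IsCompact Y)
    (hloc : ∀ y ∈ Y, ∃ U : Set V, IsOpen U ∧ y ∈ U ∧ ∃ ε > (0 : ℝ),
      ∀ s ∈ Set.Ioc (0 : ℝ) ε, ∀ z ∈ Y ∩ U, η (s, z) ∉ Y ∩ U) :
    ∃ ε > (0 : ℝ), ∀ s ∈ Set.Ioc (0 : ℝ) ε, ∀ z ∈ Y, η (s, z) ∉ Y := by
  refine hY.induction_on (p := NoShortChordsFrom η Y) .empty (fun _ _ hZ h => h.mono hZ)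
    (fun _ _ h h' => h.union h') fun y hy => ?_
  obtain ⟨U, hU, hyU, ε, hε, hchord⟩ := hloc y hy
  exact NoShortChordsFrom.exists_mem_nhdsWithin hcont hid hU hyU hε hchord
end

section
/- Let E be a finite-dimensional real normed vector space with a nondegenerate alternating bilinear form ω, and let f : E → ℝ be differentiable with f(x) > 0 for all x. Define h : E × E → ℝ by h(z₁, z₂) = √(f(z₁)² + f(z₂)²), and let v_h be the Hamiltonian vector field of h with respect to the product form (ω ⊕ ω)((u₁,u₂),(w₁,w₂)) = ω(u₁,w₁) + ω(u₂,w₂). If γ₁, γ₂ : ℝ → E are integral curves of the Hamiltonian vector field v_f of f with f(γ₁(0)) = f(γ₂(0)) = 1, then δ(t) := (γ₁(t/√2), γ₂(t/√2)) is an integral curve of v_h. -/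
/-!
Since `ω` is alternating, `Df(x)(v_f x) = ω(v_f x, v_f x) = 0`, so `f` is constant along
integral curves of `v_f` and both curves stay in `{f = 1}`. The chain rule gives
`v_{f # g} = (f # g)⁻¹ • (f • v_f, g • v_g)` wherever `f # g ≠ 0` (nondegeneracy identifies a
vector field from its contraction with `ω`), which on `{f = 1} × {f = 1}` is
`(√2)⁻¹ • (v_f, v_f)`: exactly the velocity of the diagonal flow run at speed `1/√2`.
-/

open ContinuousLinearMap

section Hamiltonian

variable {E F : Type*} [NormedAddCommGroup E] [NormedSpace ℝ E]
  [NormedAddCommGroup F] [NormedSpace ℝ F]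

def IsHamiltonianVectorField (ω : E →ₗ[ℝ] E →ₗ[ℝ] ℝ) (f : E → ℝ) (v : E → E) : Prop :=
  ∀ x u, ω (v x) u = fderiv ℝ f x u

def LinearMap.prodForm (ω : E →ₗ[ℝ] E →ₗ[ℝ] ℝ) (ω' : F →ₗ[ℝ] F →ₗ[ℝ] ℝ) :
    E × F →ₗ[ℝ] E × F →ₗ[ℝ] ℝ :=
  ω.compl₁₂ (LinearMap.fst ℝ E F) (LinearMap.fst ℝ E F) +
    ω'.compl₁₂ (LinearMap.snd ℝ E F) (LinearMap.snd ℝ E F)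

@[simp]
theorem LinearMap.prodForm_apply (ω : E →ₗ[ℝ] E →ₗ[ℝ] ℝ) (ω' : F →ₗ[ℝ] F →ₗ[ℝ] ℝ)
    (z u : E × F) : ω.prodForm ω' z u = ω z.1 u.1 + ω' z.2 u.2 :=
  rfl

/-- The paper's `f # g`. -/
noncomputable def hashSum (f : E → ℝ) (g : F → ℝ) (z : E × F) : ℝ :=
  √(f z.1 ^ 2 + g z.2 ^ 2)

variable {ω : E →ₗ[ℝ] E →ₗ[ℝ] ℝ} {f : E → ℝ} {v : E → E}

theorem IsHamiltonianVectorField.eq_smul_apply (hnd : ∀ u, (∀ w, ω u w = 0) → u = 0)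
    (hv : IsHamiltonianVectorField ω f v) {x w : E} {c : ℝ}
    (hw : ∀ u, ω w u = c * fderiv ℝ f x u) : w = c • v x := by
  refine sub_eq_zero.mp (hnd _ fun u => ?_)
  simp [hw, ← hv x u]

theorem IsHamiltonianVectorField.apply_eq_of_hasDerivAt (halt : ∀ u, ω u u = 0)
    (hv : IsHamiltonianVectorField ω f v) {γ : ℝ → E}
    (hf : ∀ t, DifferentiableAt ℝ f (γ t)) (hγ : ∀ t, HasDerivAt γ (v (γ t)) t) (s t : ℝ) :
    f (γ s) = f (γ t) := by
  have hderiv : ∀ t, HasDerivAt (f ∘ γ) 0 t := fun t => by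
    simpa [← hv (γ t), halt] using (hf t).hasFDerivAt.comp_hasDerivAt t (hγ t)
  exact is_const_of_deriv_eq_zero (fun t => (hderiv t).differentiableAt)
    (fun t => (hderiv t).deriv) s t

theorem hasFDerivAt_hashSum {g : F → ℝ} {z : E × F} (hf : DifferentiableAt ℝ f z.1)
    (hg : DifferentiableAt ℝ g z.2) (hz : f z.1 ^ 2 + g z.2 ^ 2 ≠ 0) :
    HasFDerivAt (hashSum f g)
      ((hashSum f g z)⁻¹ • (f z.1 • (fderiv ℝ f z.1).comp (fst ℝ E F) +
        g z.2 • (fderiv ℝ g z.2).comp (snd ℝ E F))) z := by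
  have hsq : HasFDerivAt (fun w : E × F => f w.1 ^ 2 + g w.2 ^ 2) _ z :=
    ((hf.hasFDerivAt.comp z hasFDerivAt_fst).pow 2).add
      ((hg.hasFDerivAt.comp z hasFDerivAt_snd).pow 2)
  refine (hsq.sqrt hz).congr_fderiv (ContinuousLinearMap.ext fun u => ?_)
  simp only [hashSum, Function.comp_apply, add_apply, smul_apply, comp_apply, coe_fst', coe_snd',
    smul_eq_mul, nsmul_eq_mul, Nat.cast_ofNat, Nat.add_one_sub_one, pow_one]
  ring

theorem IsHamiltonianVectorField.hashSum_apply {ω' : F →ₗ[ℝ] F →ₗ[ℝ] ℝ} {g : F → ℝ}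
    {w : F → F} {vh : E × F → E × F} (hnd : ∀ u, (∀ w, ω u w = 0) → u = 0)
    (hnd' : ∀ u, (∀ w, ω' u w = 0) → u = 0) (hv : IsHamiltonianVectorField ω f v)
    (hw : IsHamiltonianVectorField ω' g w)
    (hvh : IsHamiltonianVectorField (ω.prodForm ω') (hashSum f g) vh) {z : E × F}
    (hf : DifferentiableAt ℝ f z.1) (hg : DifferentiableAt ℝ g z.2)
    (hz : f z.1 ^ 2 + g z.2 ^ 2 ≠ 0) :
    vh z = (hashSum f g z)⁻¹ • (f z.1 • v z.1, g z.2 • w z.2) := by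
  have hder := (hasFDerivAt_hashSum hf hg hz).fderiv
  refine Prod.ext ?_ ?_
  · rw [Prod.smul_fst, smul_smul]
    refine hv.eq_smul_apply hnd fun u => ?_
    simpa [hder, mul_assoc] using hvh z (u, 0)
  · rw [Prod.smul_snd, smul_smul]
    refine hw.eq_smul_apply hnd' fun u => ?_
    simpa [hder, mul_assoc] using hvh z (0, u)

theorem hasDerivAt_comp_div_const {v : E → E} {γ : ℝ → E}
    (hγ : ∀ t, HasDerivAt γ (v (γ t)) t) (c t : ℝ) :
    HasDerivAt (fun t => γ (t / c)) (c⁻¹ • v (γ (t / c))) t := by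
  simpa [Function.comp_def] using (hγ (t / c)).scomp t ((hasDerivAt_id t).div_const c)

end Hamiltonian

theorem diagonal_flow_of_hash_hamiltonian_general
    (E : Type*) [NormedAddCommGroup E] [NormedSpace ℝ E]
    (ω : E →ₗ[ℝ] E →ₗ[ℝ] ℝ)
    (halt : ∀ u : E, ω u u = 0)
    (hnd : ∀ u : E, (∀ w : E, ω u w = 0) → u = 0)
    (f : E → ℝ) (hf : Differentiable ℝ f)
    (vf : E → E)
    (hvf : ∀ x u : E, ω (vf x) u = fderiv ℝ f x u)
    (vh : E × E → E × E)
    (hvh : ∀ z u : E × E, ω (vh z).1 u.1 + ω (vh z).2 u.2 =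
      fderiv ℝ (fun w : E × E => Real.sqrt (f w.1 ^ 2 + f w.2 ^ 2)) z u)
    (γ₁ γ₂ : ℝ → E)
    (hγ₁ : ∀ t : ℝ, HasDerivAt γ₁ (vf (γ₁ t)) t)
    (hγ₂ : ∀ t : ℝ, HasDerivAt γ₂ (vf (γ₂ t)) t)
    (h1 : f (γ₁ 0) = 1) (h2 : f (γ₂ 0) = 1) :
    ∀ t : ℝ, HasDerivAt (fun t => (γ₁ (t / Real.sqrt 2), γ₂ (t / Real.sqrt 2)))
      (vh (γ₁ (t / Real.sqrt 2), γ₂ (t / Real.sqrt 2))) t := by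
  have hvf : IsHamiltonianVectorField ω f vf := hvf
  have hvh : IsHamiltonianVectorField (ω.prodForm ω) (hashSum f f) vh := hvh
  intro t
  have hc₁ : f (γ₁ (t / √2)) = 1 :=
    (hvf.apply_eq_of_hasDerivAt halt (fun _ => hf _) hγ₁ _ 0).trans h1
  have hc₂ : f (γ₂ (t / √2)) = 1 :=
    (hvf.apply_eq_of_hasDerivAt halt (fun _ => hf _) hγ₂ _ 0).trans h2
  have hvh_diag : vh (γ₁ (t / √2), γ₂ (t / √2)) =
      (√2)⁻¹ • (vf (γ₁ (t / √2)), vf (γ₂ (t / √2))) := by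
    rw [IsHamiltonianVectorField.hashSum_apply hnd hnd hvf hvf hvh (hf _) (hf _)
      (by norm_num [hc₁, hc₂])]
    norm_num [hashSum, hc₁, hc₂]
  rw [hvh_diag]
  exact (hasDerivAt_comp_div_const hγ₁ _ t).prodMk (hasDerivAt_comp_div_const hγ₂ _ t)

/-- Computational core of the paper's Lemma "three ways of looking at a Reeb
chord": if `γ₁, γ₂` are integral curves of the Hamiltonian vector field of `f`
with `f(γᵢ(0)) = 1`, then `t ↦ (γ₁(t/√2), γ₂(t/√2))` is an integral curve of
the Hamiltonian vector field of `h(z₁,z₂) = √(f(z₁)² + f(z₂)²)` with respect to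
the product form. -/
theorem diagonal_flow_of_hash_hamiltonian
    (E : Type*) [NormedAddCommGroup E] [NormedSpace ℝ E] [FiniteDimensional ℝ E]
    (ω : E →ₗ[ℝ] E →ₗ[ℝ] ℝ)
    (halt : ∀ u : E, ω u u = 0)
    (hnd : ∀ u : E, (∀ w : E, ω u w = 0) → u = 0)
    (f : E → ℝ) (hf : Differentiable ℝ f) (hfpos : ∀ x : E, 0 < f x)
    (vf : E → E)
    (hvf : ∀ x u : E, ω (vf x) u = fderiv ℝ f x u)
    (vh : E × E → E × E)
    (hvh : ∀ z u : E × E, ω (vh z).1 u.1 + ω (vh z).2 u.2 =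
      fderiv ℝ (fun w : E × E => Real.sqrt (f w.1 ^ 2 + f w.2 ^ 2)) z u)
    (γ₁ γ₂ : ℝ → E)
    (hγ₁ : ∀ t : ℝ, HasDerivAt γ₁ (vf (γ₁ t)) t)
    (hγ₂ : ∀ t : ℝ, HasDerivAt γ₂ (vf (γ₂ t)) t)
    (h1 : f (γ₁ 0) = 1) (h2 : f (γ₂ 0) = 1) :
    ∀ t : ℝ, HasDerivAt (fun t => (γ₁ (t / Real.sqrt 2), γ₂ (t / Real.sqrt 2)))
      (vh (γ₁ (t / Real.sqrt 2), γ₂ (t / Real.sqrt 2))) t :=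
  diagonal_flow_of_hash_hamiltonian_general E ω halt hnd f hf vf hvf vh hvh γ₁ γ₂ hγ₁ hγ₂ h1 h2
end

section
/- Let V be a real vector space, let ω₁, ω₂ : V × V → ℝ be alternating bilinear forms, and let A, K ⊆ V be subspaces with A + K = V. Assume: ω₁(a, v) = 0 for all a ∈ A and v ∈ V; ω₂(k, v) = 0 for all k ∈ K and v ∈ V; the restriction of ω₁ to K is nondegenerate (if k ∈ K and ω₁(k, k') = 0 for all k' ∈ K then k = 0); and the restriction of ω₂ to A is nondegenerate. Then ω₁ + ω₂ is nondegenerate on V: if x ∈ V satisfies (ω₁ + ω₂)(x, v) = 0 for all v ∈ V, then x = 0. -/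
/-! Write `x = a + k` with `a ∈ A`, `k ∈ K`. Pairing `x` with `k' ∈ K` sees only `ω₁ k k'`,
since `ω₁` kills `A` and `ω₂`, being alternating and hence reflexive, kills `K` on both sides;
so `k = 0`. Then pairing `x = a` with `a' ∈ A` sees only `ω₂ a a'`, so `a = 0`. -/

namespace LinearMap

variable {R M N : Type*} [CommSemiring R] [AddCommMonoid M] [Module R M]
  [AddCommMonoid N] [Module R N]

theorem IsRefl.add_apply_add_of_mem_right {B₁ B₂ : M →ₗ[R] M →ₗ[R] N} (hB₂ : B₂.IsRefl)
    {A K : Submodule R M} (h1A : ∀ a ∈ A, ∀ v, B₁ a v = 0) (h2K : ∀ k ∈ K, ∀ v, B₂ k v = 0)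
    {a k k' : M} (ha : a ∈ A) (hk : k ∈ K) (hk' : k' ∈ K) :
    B₁ (a + k) k' + B₂ (a + k) k' = B₁ k k' := by
  rw [map_add, map_add, add_apply, add_apply, h1A a ha, h2K k hk, hB₂ k' a (h2K k' hk' a)]
  simp only [zero_add, add_zero]

end LinearMap

theorem sum_of_forms_nondegenerate_general
    (V : Type*) [AddCommGroup V] [Module ℝ V]
    (ω₁ ω₂ : V →ₗ[ℝ] V →ₗ[ℝ] ℝ)
    (h2alt : ∀ v : V, ω₂ v v = 0)
    (A K : Submodule ℝ V) (hsum : A ⊔ K = ⊤)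
    (h1A : ∀ a ∈ A, ∀ v : V, ω₁ a v = 0)
    (h2K : ∀ k ∈ K, ∀ v : V, ω₂ k v = 0)
    (h1K : ∀ k ∈ K, (∀ k' ∈ K, ω₁ k k' = 0) → k = 0)
    (h2A : ∀ a ∈ A, (∀ a' ∈ A, ω₂ a a' = 0) → a = 0) :
    ∀ x : V, (∀ v : V, ω₁ x v + ω₂ x v = 0) → x = 0 := by
  intro x hx
  have hxAK : x ∈ A ⊔ K := hsum ▸ Submodule.mem_top
  obtain ⟨a, ha, k, hk, rfl⟩ := Submodule.mem_sup.mp hxAK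
  obtain rfl : k = 0 := h1K k hk fun k' hk' => by
    have hω₂ : ω₂.IsRefl := LinearMap.IsAlt.isRefl h2alt
    rw [← hω₂.add_apply_add_of_mem_right h1A h2K ha hk hk', hx]
  rw [add_zero] at hx ⊢
  exact h2A a ha fun a' _ => by simpa only [h1A a ha, zero_add] using hx a'

/-- Linear-algebra heart of the paper's Lemma `lem:symprelcot`: if `V = A + K`,
`ω₁` vanishes on `A`, `ω₂` vanishes on `K`, `ω₁` is nondegenerate on `K` and
`ω₂` is nondegenerate on `A`, then `ω₁ + ω₂` is nondegenerate on `V`. -/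
theorem sum_of_forms_nondegenerate
    (V : Type*) [AddCommGroup V] [Module ℝ V]
    (ω₁ ω₂ : V →ₗ[ℝ] V →ₗ[ℝ] ℝ)
    (h1alt : ∀ v : V, ω₁ v v = 0) (h2alt : ∀ v : V, ω₂ v v = 0)
    (A K : Submodule ℝ V) (hsum : A ⊔ K = ⊤)
    (h1A : ∀ a ∈ A, ∀ v : V, ω₁ a v = 0)
    (h2K : ∀ k ∈ K, ∀ v : V, ω₂ k v = 0)
    (h1K : ∀ k ∈ K, (∀ k' ∈ K, ω₁ k k' = 0) → k = 0)
    (h2A : ∀ a ∈ A, (∀ a' ∈ A, ω₂ a a' = 0) → a = 0) :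
    ∀ x : V, (∀ v : V, ω₁ x v + ω₂ x v = 0) → x = 0 :=
  sum_of_forms_nondegenerate_general V ω₁ ω₂ h2alt A K hsum h1A h2K h1K h2A
end

section
/- Let V be a real vector space with an internal direct sum decomposition V = A ⊕ K, and let ω₁, ω₂ : V × V → ℝ be alternating bilinear forms with ω₁(a, v) = 0 for all a ∈ A, v ∈ V and ω₂(k, v) = 0 for all k ∈ K, v ∈ V. Let P ⊆ A be a maximal isotropic subspace for the restriction of ω₂ to A, and let Q ⊆ K be a maximal isotropic subspace for the restriction of ω₁ to K (a subspace is isotropic for a form if the form vanishes identically on it; maximal isotropic if it is not properly contained in any larger isotropic subspace of A, respectively K). Then P ⊕ Q is a maximal isotropic subspace of V for the form ω₁ + ω₂. -/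
/-!
Since `ω₁` vanishes on `A` and `ω₂` on `K`, on `P ⊔ Q` the form `ω₁ + ω₂` reduces to
`ω₂` on `P` plus `ω₁` on `Q`, so `P ⊔ Q` is isotropic. For maximality, split an element
`r = a + k` of a larger isotropic subspace along `V = A ⊕ K`: pairing `r` with `P` shows
`ω₂ a P = 0`, so `P + span {a}` is `ω₂`-isotropic inside `A` and maximality of `P` gives
`a ∈ P`; symmetrically `k ∈ Q`.
-/

open LinearMap (ker mem_ker)

namespace Submodule

variable {R M : Type*} [CommRing R] [AddCommGroup M] [Module R M]

def IsIsotropic (ω : M →ₗ[R] M →ₗ[R] R) (W : Submodule R M) : Prop :=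
  ∀ x ∈ W, ∀ y ∈ W, ω x y = 0

variable {ω ω₁ ω₂ : M →ₗ[R] M →ₗ[R] R} {W P Q A K : Submodule R M}

theorem IsIsotropic.add (h₁ : W.IsIsotropic ω₁) (h₂ : W.IsIsotropic ω₂) :
    W.IsIsotropic (ω₁ + ω₂) := fun x hx y hy => by
  rw [LinearMap.add_apply, LinearMap.add_apply, h₁ x hx y hy, h₂ x hx y hy, add_zero]

theorem IsIsotropic.sup_of_le_ker (hω : ω.IsAlt) (hP : P ≤ ker ω)
    (hQ : Q.IsIsotropic ω) : (P ⊔ Q).IsIsotropic ω := by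
  intro x hx y hy
  obtain ⟨p, hp, q, hq, rfl⟩ := mem_sup.mp hx
  obtain ⟨p', hp', q', hq', rfl⟩ := mem_sup.mp hy
  simp only [map_add, mem_ker.mp (hP hp),
    hω.isRefl _ _ (LinearMap.congr_fun (mem_ker.mp (hP hp')) q), hQ q hq q' hq',
    zero_add, add_zero]

theorem IsIsotropic.sup_span_singleton (hω : ω.IsAlt) (hW : W.IsIsotropic ω) {a : M}
    (ha : ∀ w ∈ W, ω a w = 0) : (W ⊔ span R {a}).IsIsotropic ω := by
  intro x hx y hy
  obtain ⟨w, hw, _, hz, rfl⟩ := mem_sup.mp hx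
  obtain ⟨w', hw', _, hz', rfl⟩ := mem_sup.mp hy
  obtain ⟨c, rfl⟩ := mem_span_singleton.mp hz
  obtain ⟨c', rfl⟩ := mem_span_singleton.mp hz'
  simp only [map_add, map_smul, LinearMap.add_apply, LinearMap.smul_apply, smul_eq_mul,
    hW w hw w' hw', ha w' hw', hω.isRefl _ _ (ha w hw), hω a]
  ring

theorem IsIsotropic.mem_of_maximal (hω : ω.IsAlt) (hWA : W ≤ A) (hW : W.IsIsotropic ω)
    (hmax : ∀ W' : Submodule R M, W' ≤ A → W'.IsIsotropic ω → W ≤ W' → W' = W)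
    {a : M} (haA : a ∈ A) (ha : ∀ w ∈ W, ω a w = 0) : a ∈ W := by
  have hsup : W ⊔ span R {a} = W :=
    hmax _ (sup_le hWA ((span_singleton_le_iff_mem a A).mpr haA))
      (hW.sup_span_singleton hω ha) le_sup_left
  exact hsup ▸ mem_sup_right (mem_span_singleton_self a)

theorem IsIsotropic.mem_of_add_mem (hω₁ : ω₁.IsAlt) (hω₂ : ω₂.IsAlt)
    (hA : A ≤ ker ω₁) (hK : K ≤ ker ω₂) (hPA : P ≤ A) (hP : P.IsIsotropic ω₂)
    (hPmax : ∀ P' : Submodule R M, P' ≤ A → P'.IsIsotropic ω₂ → P ≤ P' → P' = P)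
    {S : Submodule R M} (hS : S.IsIsotropic (ω₁ + ω₂)) (hPS : P ≤ S)
    {a k : M} (haA : a ∈ A) (hkK : k ∈ K) (hak : a + k ∈ S) : a ∈ P := by
  refine hP.mem_of_maximal hω₂ hPA hPmax haA fun p hp => ?_
  calc ω₂ a p = (ω₁ + ω₂) (a + k) p := by
        simp only [LinearMap.add_apply, map_add, mem_ker.mp (hA haA), mem_ker.mp (hK hkK),
          hω₁.isRefl _ _ (LinearMap.congr_fun (mem_ker.mp (hA (hPA hp))) k),
          zero_add, add_zero]
    _ = 0 := hS _ hak _ (hPS hp)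

end Submodule

open Submodule

/-- Fiberwise linear-algebra content of the paper's Lemma `lem:symprelcot` and
Proposition `prop:liouvrelcot` (4): if `V = A ⊕ K`, `ω₁` vanishes on `A`, `ω₂`
vanishes on `K`, `P ⊆ A` is maximal isotropic for `ω₂|_A` and `Q ⊆ K` is
maximal isotropic for `ω₁|_K`, then `P ⊕ Q` is maximal isotropic in `V` for
`ω₁ + ω₂`. -/
theorem direct_sum_of_maximal_isotropics
    (V : Type*) [AddCommGroup V] [Module ℝ V]
    (A K : Submodule ℝ V) (hcompl : IsCompl A K)
    (ω₁ ω₂ : V →ₗ[ℝ] V →ₗ[ℝ] ℝ)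
    (h1alt : ∀ v : V, ω₁ v v = 0) (h2alt : ∀ v : V, ω₂ v v = 0)
    (h1A : ∀ a ∈ A, ∀ v : V, ω₁ a v = 0)
    (h2K : ∀ k ∈ K, ∀ v : V, ω₂ k v = 0)
    (P : Submodule ℝ V) (hPA : P ≤ A)
    (hPiso : ∀ p ∈ P, ∀ p' ∈ P, ω₂ p p' = 0)
    (hPmax : ∀ P' : Submodule ℝ V, P' ≤ A →
      (∀ x ∈ P', ∀ y ∈ P', ω₂ x y = 0) → P ≤ P' → P' = P)
    (Q : Submodule ℝ V) (hQK : Q ≤ K)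
    (hQiso : ∀ q ∈ Q, ∀ q' ∈ Q, ω₁ q q' = 0)
    (hQmax : ∀ Q' : Submodule ℝ V, Q' ≤ K →
      (∀ x ∈ Q', ∀ y ∈ Q', ω₁ x y = 0) → Q ≤ Q' → Q' = Q) :
    (∀ x ∈ P ⊔ Q, ∀ y ∈ P ⊔ Q, ω₁ x y + ω₂ x y = 0) ∧
    (∀ R : Submodule ℝ V, (∀ x ∈ R, ∀ y ∈ R, ω₁ x y + ω₂ x y = 0) →
      P ⊔ Q ≤ R → R = P ⊔ Q) := by
  have hA : A ≤ ker ω₁ := fun a ha => mem_ker.mpr (LinearMap.ext (h1A a ha))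
  have hK : K ≤ ker ω₂ := fun k hk => mem_ker.mpr (LinearMap.ext (h2K k hk))
  have hPQ₁ : (P ⊔ Q).IsIsotropic ω₁ := IsIsotropic.sup_of_le_ker h1alt (hPA.trans hA) hQiso
  have hPQ₂ : (P ⊔ Q).IsIsotropic ω₂ :=
    sup_comm Q P ▸ IsIsotropic.sup_of_le_ker h2alt (hQK.trans hK) hPiso
  refine ⟨hPQ₁.add hPQ₂, fun R hR hle => le_antisymm (fun r hr => ?_) hle⟩
  obtain ⟨a, ha, k, hk, rfl⟩ := mem_sup.mp (hcompl.sup_eq_top ▸ mem_top : r ∈ A ⊔ K)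
  have haP : a ∈ P := IsIsotropic.mem_of_add_mem h1alt h2alt hA hK hPA hPiso hPmax hR
    (le_sup_left.trans hle) ha hk hr
  have hkQ : k ∈ Q := IsIsotropic.mem_of_add_mem h2alt h1alt hK hA hQK hQiso hQmax
    (add_comm ω₁ ω₂ ▸ hR) (le_sup_right.trans hle) hk ha (add_comm a k ▸ hr)
  exact add_mem (mem_sup_left haP) (mem_sup_right hkQ)
end
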